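/- Let M = (L, μ0, Σ, δ) be an MDP and α a strategy such that M with strategy α is strongly synchronizing. Let ν = min { δ(ℓ,σ)(ℓ') : ℓ,ℓ' ∈ L, σ ∈ Σ, δ(ℓ,σ)(ℓ') > 0 } be the smallest positive transition probability of M, and fix any ε with 0 < ε < ν/(1+ν). Then there exists n_0 ∈ ℕ such that for every n ≥ n_0 there is a unique state q_n with X_n^α(q_n) > 1 − ε, and for every n ≥ n_0 there exists an action σ ∈ Σ such that Post_σ(q_n) = {q_{n+1}} is a singleton. -/
import Mathlib


open Filter

namespace SyncMDP

/-- A history: an initial state followed by a list of (action, state) steps. -/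
structure Hist (L A : Type) where
  start : L
  steps : List (A × L)
deriving DecidableEq

variable {L A : Type}

/-- The last state of a history. -/
def Hist.last (h : Hist L A) : L := h.steps.foldl (fun _ p => p.2) h.start

/-- The length of a history. -/
def Hist.len (h : Hist L A) : ℕ := h.steps.length

/-- Extending a history by one action and one state. -/
def Hist.extend (h : Hist L A) (a : A) (l : L) : Hist L A := ⟨h.start, h.steps ++ [(a, l)]⟩

/-- A probability distribution on a finite type. -/
def IsDist {S : Type} [Fintype S] (d : S → ℝ) : Prop :=
  (∀ s, 0 ≤ d s) ∧ ∑ s, d s = 1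

/-- A probabilistic transition function. -/
def IsTrans [Fintype L] (δ : L → A → L → ℝ) : Prop := ∀ l a, IsDist (δ l a)

/-- A (randomized) strategy assigns a distribution over actions to every history. -/
def IsStrategy [Fintype A] (α : Hist L A → A → ℝ) : Prop :=
  ∀ h : Hist L A, (∀ a, 0 ≤ α h a) ∧ ∑ a, α h a = 1

/-- A pure strategy plays one action with probability one after every history. -/
def PureStrat (α : Hist L A → A → ℝ) : Prop := ∀ h, ∃ a, α h a = 1

/-- A blind strategy only depends on the length of the history. -/
def BlindStrat (α : Hist L A → A → ℝ) : Prop :=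
  ∀ h₁ h₂ : Hist L A, h₁.len = h₂.len → α h₁ = α h₂

/-- A memoryless strategy only depends on the last state of the history. -/
def Memoryless (α : Hist L A → A → ℝ) : Prop :=
  ∀ h₁ h₂ : Hist L A, h₁.last = h₂.last → α h₁ = α h₂

/-- Auxiliary product for the probability of a history: the first argument is the current
state, the second the history (prefix) read so far, the third the remaining steps. -/
def prAux (δ : L → A → L → ℝ) (α : Hist L A → A → ℝ) : L → Hist L A → List (A × L) → ℝ
  | _, _, [] => 1
  | cur, pre, (a, l) :: rest => α pre a * δ cur a l * prAux δ α l (pre.extend a l) rest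

/-- The probability `Pr^α(h)` of a history `h`. -/
def pr (μ0 : L → ℝ) (δ : L → A → L → ℝ) (α : Hist L A → A → ℝ) (h : Hist L A) : ℝ :=
  μ0 h.start * prAux δ α h.start ⟨h.start, []⟩ h.steps

variable (L A) in
/-- The finite set of all histories of length `n`. -/
def hists [Fintype L] [DecidableEq L] [Fintype A] [DecidableEq A] : ℕ → Finset (Hist L A)
  | 0 => Finset.univ.image fun l : L => ⟨l, []⟩
  | n + 1 => (hists n).biUnion fun h => Finset.univ.image fun p : A × L => h.extend p.1 p.2

variable [Fintype L] [DecidableEq L] [Fintype A] [DecidableEq A]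

/-- The outcome `X_n^α` : the distribution over states at step `n` under strategy `α`. -/
noncomputable def outcome (μ0 : L → ℝ) (δ : L → A → L → ℝ) (α : Hist L A → A → ℝ)
    (n : ℕ) (l : L) : ℝ :=
  ∑ h ∈ (hists L A n).filter (fun h => h.last = l), pr μ0 δ α h

/-- The norm `‖X‖ = max_{ℓ ∈ L} X(ℓ)` of a distribution on a (nonempty) finite type. -/
noncomputable def dnorm (X : L → ℝ) : ℝ := ⨆ l, X l

/-- Strongly synchronizing: `liminf_n ‖X_n^α‖ = 1`. -/
def StronglySync (μ0 : L → ℝ) (δ : L → A → L → ℝ) (α : Hist L A → A → ℝ) : Prop :=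
  liminf (fun n => dnorm (outcome μ0 δ α n)) atTop = 1

/-- Weakly synchronizing: `limsup_n ‖X_n^α‖ = 1`. -/
def WeaklySync (μ0 : L → ℝ) (δ : L → A → L → ℝ) (α : Hist L A → A → ℝ) : Prop :=
  limsup (fun n => dnorm (outcome μ0 δ α n)) atTop = 1

open Classical in
/-- `Post_σ(ℓ)`: the support of `δ(ℓ,σ)`. -/
noncomputable def post (δ : L → A → L → ℝ) (l : L) (a : A) : Finset L :=
  Finset.univ.filter fun l' => 0 < δ l a l'

/-- Transition function of the perfect-information subset construction. -/
noncomputable def deltaP (δ : L → A → L → ℝ) (s : Finset L) (f : L → A) : Finset L :=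
  s.biUnion fun l => post δ l (f l)

/-- Transition function of the blind subset construction. -/
noncomputable def deltaB (δ : L → A → L → ℝ) (s : Finset L) (a : A) : Finset L :=
  s.biUnion fun l => post δ l a

open Classical in
/-- The initial cell: the support of `μ0`. -/
noncomputable def initCell (μ0 : L → ℝ) : Finset L :=
  Finset.univ.filter fun l => 0 < μ0 l

/-- Reachability of a cell from the initial cell in the perfect-information
subset construction. -/
def ReachP (μ0 : L → ℝ) (δ : L → A → L → ℝ) (s : Finset L) : Prop :=
  Relation.ReflTransGen (fun t t' => ∃ f : L → A, deltaP δ t f = t') (initCell μ0) s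

/-- Reachability of a cell from the initial cell in the blind subset construction. -/
def ReachB (μ0 : L → ℝ) (δ : L → A → L → ℝ) (s : Finset L) : Prop :=
  Relation.ReflTransGen (fun t t' => ∃ a : A, deltaB δ t a = t') (initCell μ0) s

/-- Cyclic successor on `Fin d`. -/
def cyc {d : ℕ} (hd : 0 < d) (i : Fin d) : Fin d := ⟨((i : ℕ) + 1) % d, Nat.mod_lt _ hd⟩

/-- A recurrent cyclic set for the cycle `(s, act)` of length `d` of the
perfect-information subset construction. -/
def IsRCSP {d : ℕ} (hd : 0 < d) (δ : L → A → L → ℝ) (s : Fin d → Finset L)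
    (act : Fin d → L → A) (g : Fin d → Finset L) : Prop :=
  ∀ i : Fin d, (g i).Nonempty ∧ g i ⊆ s i ∧
    (g i).biUnion (fun l => post δ l (act i l)) = g (cyc hd i)

/-- A minimal recurrent cyclic set (perfect-information). -/
def IsMinRCSP {d : ℕ} (hd : 0 < d) (δ : L → A → L → ℝ) (s : Fin d → Finset L)
    (act : Fin d → L → A) (g : Fin d → Finset L) : Prop :=
  IsRCSP hd δ s act g ∧
    ∀ g' : Fin d → Finset L, IsRCSP hd δ s act g' → (∀ i, g' i ⊆ g i) → g' = g

/-- A recurrent cyclic set for the cycle `(s, act)` of length `d` of the blind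
subset construction. -/
def IsRCSB {d : ℕ} (hd : 0 < d) (δ : L → A → L → ℝ) (s : Fin d → Finset L)
    (act : Fin d → A) (g : Fin d → Finset L) : Prop :=
  ∀ i : Fin d, (g i).Nonempty ∧ g i ⊆ s i ∧
    (g i).biUnion (fun l => post δ l (act i)) = g (cyc hd i)

/-- A minimal recurrent cyclic set (blind). -/
def IsMinRCSB {d : ℕ} (hd : 0 < d) (δ : L → A → L → ℝ) (s : Fin d → Finset L)
    (act : Fin d → A) (g : Fin d → Finset L) : Prop :=
  IsRCSB hd δ s act g ∧
    ∀ g' : Fin d → Finset L, IsRCSB hd δ s act g' → (∀ i, g' i ⊆ g i) → g' = g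


/-! ### Auxiliary lemmas -/

section Aux

variable (μ0 : L → ℝ) (δ : L → A → L → ℝ) (α : Hist L A → A → ℝ)

lemma last_extend (h : Hist L A) (a : A) (l : L) : (h.extend a l).last = l := by
  simp [Hist.extend, Hist.last]

lemma prAux_append (a : A) (l : L) :
    ∀ (rest : List (A × L)) (cur : L) (pre : Hist L A),
      prAux δ α cur pre (rest ++ [(a, l)]) =
        prAux δ α cur pre rest *
          (α ⟨pre.start, pre.steps ++ rest⟩ a * δ (rest.foldl (fun _ p => p.2) cur) a l)
  | [], cur, pre => by simp [prAux]
  | (b, m) :: rest, cur, pre => by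
    show α pre b * δ cur b m * prAux δ α m (pre.extend b m) (rest ++ [(a, l)]) = _
    rw [prAux_append a l rest m (pre.extend b m)]
    show _ = α pre b * δ cur b m * prAux δ α m (pre.extend b m) rest *
      (α ⟨pre.start, pre.steps ++ ((b, m) :: rest)⟩ a *
        δ (List.foldl (fun _ p => p.2) m rest) a l)
    simp only [Hist.extend, List.append_assoc, List.singleton_append]
    ring

lemma pr_extend (h : Hist L A) (a : A) (l : L) :
    pr μ0 δ α (h.extend a l) = pr μ0 δ α h * (α h a * δ h.last a l) := by
  show μ0 h.start * prAux δ α h.start ⟨h.start, []⟩ (h.steps ++ [(a, l)]) = _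
  rw [prAux_append]
  simp only [List.nil_append]
  rw [show (⟨h.start, h.steps⟩ : Hist L A) = h from rfl]
  show _ = μ0 h.start * prAux δ α h.start ⟨h.start, []⟩ h.steps * (α h a * δ h.last a l)
  rw [show h.last = h.steps.foldl (fun _ p => p.2) h.start from rfl]
  ring

lemma prAux_nonneg (hδ : IsTrans δ) (hα : IsStrategy α) :
    ∀ (rest : List (A × L)) (cur : L) (pre : Hist L A), 0 ≤ prAux δ α cur pre rest
  | [], _, _ => by simp [prAux]
  | (b, m) :: rest, cur, pre => by
    have := prAux_nonneg hδ hα rest m (pre.extend b m)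
    have h1 := (hα pre).1 b
    have h2 := (hδ cur b).1 m
    simp only [prAux]
    positivity

lemma pr_nonneg (hμ0 : IsDist μ0) (hδ : IsTrans δ) (hα : IsStrategy α) (h : Hist L A) :
    0 ≤ pr μ0 δ α h :=
  mul_nonneg (hμ0.1 _) (prAux_nonneg δ α hδ hα _ _ _)

lemma delta_le_one (hδ : IsTrans δ) (l : L) (a : A) (l' : L) : δ l a l' ≤ 1 := by
  have := (hδ l a).2
  calc δ l a l' ≤ ∑ s, δ l a s :=
        Finset.single_le_sum (fun i _ => (hδ l a).1 i) (Finset.mem_univ l')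
    _ = 1 := this

lemma sum_hists_succ (f : Hist L A → ℝ) (n : ℕ) :
    ∑ h ∈ hists L A (n + 1), f h =
      ∑ h ∈ hists L A n, ∑ p : A × L, f (h.extend p.1 p.2) := by
  rw [show hists L A (n + 1) =
      (hists L A n).biUnion (fun h => Finset.univ.image fun p : A × L => h.extend p.1 p.2)
      from rfl]
  rw [Finset.sum_biUnion]
  · refine Finset.sum_congr rfl fun h _ => ?_
    rw [Finset.sum_image]
    intro p _ p' _ hpp
    simp only [Hist.extend, Hist.mk.injEq] at hpp
    have := List.append_cancel_left hpp.2
    simpa using this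
  · intro h₁ _ h₂ _ hne
    simp only [Function.onFun, Finset.disjoint_left]
    intro x hx₁ hx₂
    simp only [Finset.mem_image, Finset.mem_univ, true_and] at hx₁ hx₂
    obtain ⟨p, hp⟩ := hx₁
    obtain ⟨p', hp'⟩ := hx₂
    apply hne
    rw [← hp'] at hp
    simp only [Hist.extend, Hist.mk.injEq] at hp
    obtain ⟨hs, hst⟩ := hp
    have := (List.append_inj' hst rfl).1
    cases h₁; cases h₂
    simp_all

lemma outcome_succ (n : ℕ) (l' : L) :
    outcome μ0 δ α (n + 1) l' =
      ∑ h ∈ hists L A n, pr μ0 δ α h * ∑ a, α h a * δ h.last a l' := by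
  rw [outcome, Finset.sum_filter, sum_hists_succ]
  refine Finset.sum_congr rfl fun h _ => ?_
  rw [Fintype.sum_prod_type, Finset.mul_sum]
  refine Finset.sum_congr rfl fun a _ => ?_
  simp only [last_extend]
  rw [Finset.sum_ite_eq' Finset.univ l' (fun l => pr μ0 δ α (h.extend a l))]
  simp only [Finset.mem_univ, if_true]
  rw [pr_extend]

lemma sum_pr_hists (hμ0 : IsDist μ0) (hδ : IsTrans δ) (hα : IsStrategy α) (n : ℕ) :
    ∑ h ∈ hists L A n, pr μ0 δ α h = 1 := by
  induction n with
  | zero =>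
    rw [show hists L A 0 = Finset.univ.image fun l : L => (⟨l, []⟩ : Hist L A) from rfl]
    rw [Finset.sum_image (by intro x _ y _ hxy; simpa [Hist.mk.injEq] using hxy)]
    simp only [pr, prAux, mul_one]
    exact hμ0.2
  | succ n ih =>
    rw [sum_hists_succ]
    have key : ∀ h : Hist L A, ∑ p : A × L, pr μ0 δ α (h.extend p.1 p.2) = pr μ0 δ α h := by
      intro h
      rw [Fintype.sum_prod_type]
      have : ∀ a : A, ∑ l : L, pr μ0 δ α (h.extend a l) = pr μ0 δ α h * α h a := by
        intro a
        simp only [pr_extend]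
        simp only [show ∀ x : L, pr μ0 δ α h * (α h a * δ h.last a x) =
            pr μ0 δ α h * α h a * δ h.last a x from fun x => by ring]
        rw [← Finset.mul_sum, (hδ h.last a).2, mul_one]
      simp only [this]
      rw [← Finset.mul_sum, (hα h).2, mul_one]
    simp only [key]
    exact ih

lemma sum_outcome (hμ0 : IsDist μ0) (hδ : IsTrans δ) (hα : IsStrategy α) (n : ℕ) :
    ∑ l, outcome μ0 δ α n l = 1 := by
  rw [← sum_pr_hists μ0 δ α hμ0 hδ hα n]
  exact Finset.sum_fiberwise _ _ _

lemma outcome_nonneg (hμ0 : IsDist μ0) (hδ : IsTrans δ) (hα : IsStrategy α) (n : ℕ) (l : L) :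
    0 ≤ outcome μ0 δ α n l :=
  Finset.sum_nonneg fun h _ => pr_nonneg μ0 δ α hμ0 hδ hα h

lemma outcome_le_one (hμ0 : IsDist μ0) (hδ : IsTrans δ) (hα : IsStrategy α) (n : ℕ) (l : L) :
    outcome μ0 δ α n l ≤ 1 := by
  rw [← sum_outcome μ0 δ α hμ0 hδ hα n]
  exact Finset.single_le_sum (fun i _ => outcome_nonneg μ0 δ α hμ0 hδ hα n i)
    (Finset.mem_univ l)

lemma outcome_succ_le (hμ0 : IsDist μ0) (hδ : IsTrans δ) (hα : IsStrategy α)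
    (ν : ℝ) (hν0 : 0 ≤ ν) (hν1 : ν ≤ 1) (q q' : L) (n : ℕ)
    (hbound : ∀ a, δ q a q' ≤ 1 - ν) :
    outcome μ0 δ α (n + 1) q' ≤
      (1 - ν) * outcome μ0 δ α n q + (1 - outcome μ0 δ α n q) := by
  rw [outcome_succ]
  rw [← Finset.sum_filter_add_sum_filter_not (hists L A n) (fun h => h.last = q)]
  have hpr : ∀ h : Hist L A, 0 ≤ pr μ0 δ α h := pr_nonneg μ0 δ α hμ0 hδ hα
  have h1 : ∑ h ∈ (hists L A n).filter (fun h => h.last = q),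
      pr μ0 δ α h * ∑ a, α h a * δ h.last a q'
      ≤ (1 - ν) * outcome μ0 δ α n q := by
    rw [outcome, Finset.mul_sum]
    apply Finset.sum_le_sum
    intro h hh
    rw [Finset.mem_filter] at hh
    have hle : ∑ a, α h a * δ h.last a q' ≤ 1 - ν := by
      calc ∑ a, α h a * δ h.last a q' ≤ ∑ a, α h a * (1 - ν) := by
            apply Finset.sum_le_sum
            intro a _
            exact mul_le_mul_of_nonneg_left (by rw [hh.2]; exact hbound a) ((hα h).1 a)
        _ = 1 - ν := by rw [← Finset.sum_mul, (hα h).2, one_mul]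
    calc pr μ0 δ α h * ∑ a, α h a * δ h.last a q' ≤ pr μ0 δ α h * (1 - ν) :=
          mul_le_mul_of_nonneg_left hle (hpr h)
      _ = (1 - ν) * pr μ0 δ α h := mul_comm _ _
  have h2 : ∑ h ∈ (hists L A n).filter (fun h => ¬h.last = q),
      pr μ0 δ α h * ∑ a, α h a * δ h.last a q'
      ≤ 1 - outcome μ0 δ α n q := by
    have hsplit := Finset.sum_filter_add_sum_filter_not (hists L A n)
      (fun h => h.last = q) (pr μ0 δ α)
    have htot := sum_pr_hists μ0 δ α hμ0 hδ hα n
    have hrest : ∑ h ∈ (hists L A n).filter (fun h => ¬h.last = q), pr μ0 δ α h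
        = 1 - outcome μ0 δ α n q := by
      rw [outcome]; linarith [hsplit, htot]
    calc ∑ h ∈ (hists L A n).filter (fun h => ¬h.last = q),
          pr μ0 δ α h * ∑ a, α h a * δ h.last a q'
        ≤ ∑ h ∈ (hists L A n).filter (fun h => ¬h.last = q), pr μ0 δ α h := by
          apply Finset.sum_le_sum
          intro h _
          have hle : ∑ a, α h a * δ h.last a q' ≤ 1 := by
            calc ∑ a, α h a * δ h.last a q' ≤ ∑ a, α h a * 1 := by
                  apply Finset.sum_le_sum
                  intro a _
                  exact mul_le_mul_of_nonneg_left (delta_le_one δ hδ _ _ _) ((hα h).1 a)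
              _ = 1 := by rw [← Finset.sum_mul, (hα h).2, one_mul]
          calc pr μ0 δ α h * ∑ a, α h a * δ h.last a q' ≤ pr μ0 δ α h * 1 :=
                mul_le_mul_of_nonneg_left hle (hpr h)
            _ = pr μ0 δ α h := mul_one _
      _ = 1 - outcome μ0 δ α n q := hrest
  linarith

lemma dnorm_exists_max [Nonempty L] (X : L → ℝ) :
    ∃ l, dnorm X = X l ∧ ∀ l', X l' ≤ X l := by
  obtain ⟨l, hl⟩ := Finite.exists_max X
  exact ⟨l, le_antisymm (ciSup_le hl) (le_ciSup (Set.finite_range X).bddAbove l), hl⟩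

end Aux

/-- If `M` with strategy `α` is strongly synchronizing, `ν` is the
smallest positive transition probability of `M`, and `0 < ε < ν/(1+ν)`, then from some
step `n₀` on there is at every step `n` a unique state `q n` with
`X_n^α(q n) > 1 - ε`, and moreover some action `σ` satisfies
`Post_σ(q n) = {q (n+1)}`. -/
theorem strongly_sync_unique_state
    (μ0 : L → ℝ) (δ : L → A → L → ℝ)
    (hμ0 : IsDist μ0) (hδ : IsTrans δ)
    (α : Hist L A → A → ℝ) (hα : IsStrategy α)
    (hsync : StronglySync μ0 δ α)
    (ν : ℝ) (hν : IsLeast {x : ℝ | 0 < x ∧ ∃ l a l', δ l a l' = x} ν)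
    (ε : ℝ) (hε0 : 0 < ε) (hεν : ε < ν / (1 + ν)) :
    ∃ (n0 : ℕ) (q : ℕ → L), ∀ n, n0 ≤ n →
      (outcome μ0 δ α n (q n) > 1 - ε ∧
        ∀ q' : L, outcome μ0 δ α n q' > 1 - ε → q' = q n) ∧
      ∃ a : A, post δ (q n) a = {q (n + 1)} := by
  classical
  -- L and A are nonempty
  have hL : Nonempty L := by
    rcases isEmpty_or_nonempty L with h | h
    · exfalso; have := hμ0.2; simp [Finset.univ_eq_empty] at this
    · exact h
  have hA : Nonempty A := by
    rcases isEmpty_or_nonempty A with h | h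
    · exfalso
      have := (hα ⟨Classical.arbitrary L, []⟩).2
      simp [Finset.univ_eq_empty] at this
    · exact h
  -- facts about ν and ε
  obtain ⟨⟨hν0, l₀, a₀, l₀', hνeq⟩, hνlb⟩ := hν
  have hν1 : ν ≤ 1 := by rw [← hνeq]; exact delta_le_one δ hδ _ _ _
  have hνpos : (0:ℝ) < 1 + ν := by linarith
  have hkey : ε * (1 + ν) < ν := (lt_div_iff₀ hνpos).mp hεν
  have hεhalf : ε < 1 / 2 := by nlinarith
  -- from strong synchronization: eventually the norm exceeds 1 - ε
  have hbdd : Filter.IsBoundedUnder (· ≥ ·) atTop (fun n => dnorm (outcome μ0 δ α n)) := by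
    refine Filter.isBoundedUnder_of ⟨0, fun n => ?_⟩
    obtain ⟨l, hl, _⟩ := dnorm_exists_max (outcome μ0 δ α n)
    rw [hl]
    exact outcome_nonneg μ0 δ α hμ0 hδ hα n l
  have hev : ∀ᶠ n in atTop, 1 - ε < dnorm (outcome μ0 δ α n) := by
    apply eventually_lt_of_lt_liminf _ hbdd
    rw [hsync]; linarith
  obtain ⟨n0, hn0⟩ := Filter.eventually_atTop.mp hev
  -- existence of a heavy state at each step n ≥ n0
  have hex : ∀ n, n0 ≤ n → ∃ l, 1 - ε < outcome μ0 δ α n l := by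
    intro n hn
    obtain ⟨l, hl, _⟩ := dnorm_exists_max (outcome μ0 δ α n)
    exact ⟨l, hl ▸ hn0 n hn⟩
  set q : ℕ → L := fun n =>
    if h : ∃ l, 1 - ε < outcome μ0 δ α n l then h.choose else Classical.arbitrary L with hqdef
  have hq : ∀ n, n0 ≤ n → 1 - ε < outcome μ0 δ α n (q n) := by
    intro n hn
    rw [hqdef]
    simp only [dif_pos (hex n hn)]
    exact (hex n hn).choose_spec
  -- uniqueness of the heavy state
  have huniq : ∀ n, n0 ≤ n → ∀ q' : L, 1 - ε < outcome μ0 δ α n q' → q' = q n := by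
    intro n hn q' hq'
    by_contra hne
    have hsum : outcome μ0 δ α n q' + outcome μ0 δ α n (q n) ≤ 1 := by
      have hpair : outcome μ0 δ α n q' + outcome μ0 δ α n (q n)
          = ∑ l ∈ ({q', q n} : Finset L), outcome μ0 δ α n l :=
        (Finset.sum_pair hne).symm
      rw [hpair, ← sum_outcome μ0 δ α hμ0 hδ hα n]
      exact Finset.sum_le_sum_of_subset_of_nonneg (Finset.subset_univ _)
        (fun i _ _ => outcome_nonneg μ0 δ α hμ0 hδ hα n i)
    have := hq n hn
    linarith
  refine ⟨n0, q, fun n hn => ?_⟩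
  refine ⟨⟨hq n hn, huniq n hn⟩, ?_⟩
  -- existence of a sure action
  by_contra hno
  push_neg at hno
  have hbound : ∀ a, δ (q n) a (q (n + 1)) ≤ 1 - ν := by
    intro a
    rcases le_or_gt (δ (q n) a (q (n + 1))) 0 with hle | hpos
    · linarith
    · have hmem : q (n + 1) ∈ post δ (q n) a := by
        simp only [post, Finset.mem_filter, Finset.mem_univ, true_and]
        exact hpos
      have hother : ∃ l'' ∈ post δ (q n) a, l'' ≠ q (n + 1) := by
        by_contra hall
        push_neg at hall
        exact hno a (Finset.eq_singleton_iff_unique_mem.mpr ⟨hmem, hall⟩)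
      obtain ⟨l'', hl''mem, hl''ne⟩ := hother
      have hl''pos : 0 < δ (q n) a l'' := by
        simpa [post] using hl''mem
      have hνle : ν ≤ δ (q n) a l'' := hνlb ⟨hl''pos, q n, a, l'', rfl⟩
      have hsum : δ (q n) a (q (n + 1)) + δ (q n) a l'' ≤ 1 := by
        have hpair : δ (q n) a (q (n + 1)) + δ (q n) a l''
            = ∑ l ∈ ({q (n + 1), l''} : Finset L), δ (q n) a l :=
          (Finset.sum_pair (Ne.symm hl''ne)).symm
        rw [hpair, ← (hδ (q n) a).2]
        exact Finset.sum_le_sum_of_subset_of_nonneg (Finset.subset_univ _)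
          (fun i _ _ => (hδ (q n) a).1 i)
      linarith
  have hle := outcome_succ_le μ0 δ α hμ0 hδ hα ν (le_of_lt hν0) hν1
    (q n) (q (n + 1)) n hbound
  have hx := hq n hn
  have hy := hq (n + 1) (le_trans hn (Nat.le_succ n))
  nlinarith [outcome_le_one μ0 δ α hμ0 hδ hα n (q n)]

end SyncMDP
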